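/- Let E be a real normed space and K ⊆ E a nontrivial cone with norm-base B_K. Assume K is weakly closed, the weak closure cl_w B_K is weakly compact, and 0 ∉ cl_w B_K. If x* ∈ K^#, then the number c := sInf {x*(x) | x ∈ cl_w B_K} is strictly positive and the pair (x*, c) belongs to the augmented dual cone K^{a+}. -/

import Mathlib

/-!
The weak closure `S` of the norm-base lies in `K` (as `K` is weakly closed) and misses `0`, so `f`
is strictly positive on `S`; being weakly continuous, `f` attains its infimum `c` on the weakly
compact set `S`, whence `c > 0`. Every nonzero `y ∈ K` is `‖y‖` times a point of the norm-base,
so `f y ≥ c ‖y‖`.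
-/

open Set

variable {E : Type*} [NormedAddCommGroup E] [NormedSpace ℝ E]

/-- `K` is a cone: contains `0` and is closed under nonnegative scalar multiplication. -/
def IsCone (K : Set E) : Prop :=
  (0 : E) ∈ K ∧ ∀ t : ℝ, 0 ≤ t → ∀ x ∈ K, t • x ∈ K

/-- A cone is nontrivial if it is neither `{0}` nor the whole space. -/
def IsNontrivialCone (K : Set E) : Prop :=
  IsCone K ∧ K ≠ {0} ∧ K ≠ Set.univ

/-- The norm-base of a cone: its intersection with the unit sphere. -/
def normBase (K : Set E) : Set E := {x ∈ K | ‖x‖ = 1}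

/-- Closure of a set with respect to the weak topology `σ(E, E*)`. -/
noncomputable def wClosure (S : Set E) : Set E :=
  (toWeakSpace ℝ E).symm '' closure ((toWeakSpace ℝ E) '' S)

/-- A set is weakly compact if it is compact in the weak topology `σ(E, E*)`. -/
def WeaklyCompact (S : Set E) : Prop :=
  IsCompact ((toWeakSpace ℝ E) '' S)

/-- A set is weakly closed if it equals its weak closure. -/
noncomputable def WeaklyClosed (S : Set E) : Prop :=
  wClosure S = S

/-- The (topological) dual cone `K⁺`. -/
def dualCone (K : Set E) : Set (E →L[ℝ] ℝ) :=
  {f | ∀ k ∈ K, 0 ≤ f k}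

/-- The set `K^#` of functionals strictly positive on `K \ {0}`. -/
def sharpCone (K : Set E) : Set (E →L[ℝ] ℝ) :=
  {f | ∀ k ∈ K, k ≠ 0 → 0 < f k}

/-- The set `K^{w#}` of functionals strictly positive on the weak closure of the norm-base. -/
noncomputable def wSharpCone (K : Set E) : Set (E →L[ℝ] ℝ) :=
  {f | ∀ x ∈ wClosure (normBase K), 0 < f x}

/-- The algebraic interior (core) of a set in a real vector space. -/
def core {X : Type*} [AddCommGroup X] [Module ℝ X] (Ω : Set X) : Set X :=
  {x ∈ Ω | ∀ v : X, ∃ ε > 0, ∀ t ∈ Set.Icc (0 : ℝ) ε, x + t • v ∈ Ω}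

/-- The augmented dual cone `K^{a+}`. -/
def augDualCone (K : Set E) : Set ((E →L[ℝ] ℝ) × ℝ) :=
  {p | 0 ≤ p.2 ∧ ∀ y ∈ K, 0 ≤ p.1 y - p.2 * ‖y‖}

/-- The set `K^{a#}`. -/
def augSharpCone (K : Set E) : Set ((E →L[ℝ] ℝ) × ℝ) :=
  {p | 0 ≤ p.2 ∧ p.1 ∈ sharpCone K ∧ ∀ y ∈ K, y ≠ 0 → 0 < p.1 y - p.2 * ‖y‖}

/-- The set `K^{aw#}`. -/
noncomputable def augWSharpCone (K : Set E) : Set ((E →L[ℝ] ℝ) × ℝ) :=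
  {p | 0 ≤ p.2 ∧ p.1 ∈ sharpCone K ∧ ∀ y ∈ wClosure (normBase K), p.2 < p.1 y}

/-- `S_C = conv(B_C)`. -/
noncomputable def convBase (C : Set E) : Set E := convexHull ℝ (normBase C)

/-- `S_C^0 = conv({0} ∪ B_C)`. -/
noncomputable def convBase0 (C : Set E) : Set E := convexHull ℝ ({0} ∪ normBase C)

theorem subset_wClosure (S : Set E) : S ⊆ wClosure S := fun x hx =>
  ⟨toWeakSpace ℝ E x, subset_closure (mem_image_of_mem _ hx), (toWeakSpace ℝ E).symm_apply_apply x⟩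

theorem wClosure_mono {S T : Set E} (h : S ⊆ T) : wClosure S ⊆ wClosure T :=
  image_mono (closure_mono (image_mono h))

theorem WeaklyClosed.wClosure_subset {S K : Set E} (hK : WeaklyClosed K) (h : S ⊆ K) :
    wClosure S ⊆ K :=
  hK ▸ wClosure_mono h

theorem WeaklyCompact.isCompact_image (f : E →L[ℝ] ℝ) {S : Set E} (hS : WeaklyCompact S) :
    IsCompact (f '' S) := by
  have : ⇑f '' S = (fun y : WeakSpace ℝ E => f ((toWeakSpace ℝ E).symm y)) '' (toWeakSpace ℝ E '' S) := by
    simp only [image_image, LinearEquiv.symm_apply_apply]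
  exact this ▸ hS.image (WeakBilin.eval_continuous _ f)

theorem IsCone.inv_norm_smul_mem_normBase {K : Set E} (hK : IsCone K) {x : E} (hx : x ∈ K)
    (hx0 : x ≠ 0) : ‖x‖⁻¹ • x ∈ normBase K :=
  ⟨hK.2 _ (inv_nonneg.mpr (norm_nonneg x)) x hx, norm_smul_inv_norm hx0⟩

theorem IsNontrivialCone.normBase_nonempty {K : Set E} (hK : IsNontrivialCone K) :
    (normBase K).Nonempty := by
  obtain ⟨x, hxK, hx0⟩ : ∃ x ∈ K, x ≠ 0 := by
    by_contra! h
    exact hK.2.1 (Subset.antisymm h (singleton_subset_iff.mpr hK.1.1))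
  exact ⟨_, hK.1.inv_norm_smul_mem_normBase hxK hx0⟩

theorem IsCone.mul_norm_le_apply {K : Set E} (hK : IsCone K) (f : E →L[ℝ] ℝ) {c : ℝ}
    (hc : ∀ x ∈ normBase K, c ≤ f x) {y : E} (hy : y ∈ K) : c * ‖y‖ ≤ f y := by
  rcases eq_or_ne y 0 with rfl | hy0
  · simp
  have hyn : 0 < ‖y‖ := norm_pos_iff.mpr hy0
  have h := hc _ (hK.inv_norm_smul_mem_normBase hy hy0)
  rwa [map_smul, smul_eq_mul, inv_mul_eq_div, le_div_iff₀ hyn] at h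

theorem stmt6 (K : Set E) (hK : IsNontrivialCone K)
    (hwcl : WeaklyClosed K)
    (hcomp : WeaklyCompact (wClosure (normBase K)))
    (h0 : (0 : E) ∉ wClosure (normBase K))
    (f : E →L[ℝ] ℝ) (hf : f ∈ sharpCone K) :
    0 < sInf ((fun x => f x) '' wClosure (normBase K)) ∧
    (f, sInf ((fun x => f x) '' wClosure (normBase K))) ∈ augDualCone K := by
  set S := wClosure (normBase K)
  have hSK : S ⊆ K := hwcl.wClosure_subset fun _ hx => hx.1
  have hcpt : IsCompact (f '' S) := hcomp.isCompact_image f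
  have hne : (f '' S).Nonempty := (hK.normBase_nonempty.mono (subset_wClosure _)).image f
  obtain ⟨x₀, hx₀S, hx₀⟩ := hcpt.sInf_mem hne
  have hc : 0 < sInf (f '' S) := hx₀ ▸ hf x₀ (hSK hx₀S) (ne_of_mem_of_not_mem hx₀S h0)
  refine ⟨hc, hc.le, fun y hy => sub_nonneg.mpr ?_⟩
  exact hK.1.mul_norm_le_apply f
    (fun x hx => csInf_le hcpt.bddBelow (mem_image_of_mem f (subset_wClosure _ hx))) hy
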